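/- arXiv:math/0401446 — 2 statements merged into one kernel-verified Lean document; each statement's English description precedes it below -/
import Mathlib

section
/- Let p, q, r be paths (walks) in a quiver Q and suppose pq = qr (as concatenations of paths). If p = a_1 a_2 ⋯ a_t is a composition of arrows a_1, …, a_t with t ≥ 1, then there exist s ≥ 0 and 0 ≤ i < t such that q = p^s a_1 ⋯ a_i and r = a_{i+1} ⋯ a_t a_1 ⋯ a_i (where i = 0 means q = p^s and r = p). In particular, p and r are closed walks in Q (each starts and ends at the same vertex). -/
/-!
Levi's lemma for paths: two factorisations `p₁ q₁ = p₂ q₂` with `q₁` no longer than `q₂` differ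
by a path `e` with `q₂ = e q₁` and `p₁ = p₂ e`. If `q` is shorter than `p`, this applied to
`p q = q r` cuts `p` as `q e` with `r = e q`. Otherwise it shows `q = p q'`, and cancelling `p`
gives `p q' = q' r` with `q'` strictly shorter since `p` is nonempty, so induction on the length
of `q` peels off one copy of `p` at a time.
-/

open Quiver

/-- The `s`-fold concatenation of a closed walk with itself. -/
def pathPow {V : Type*} [Quiver V] {a : V} (p : Quiver.Path a a) : ℕ → Quiver.Path a a
  | 0 => Quiver.Path.nil
  | n + 1 => (pathPow p n).comp p

theorem pathPow_succ' {V : Type*} [Quiver V] {a : V} (p : Path a a) (n : ℕ) :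
    pathPow p (n + 1) = p.comp (pathPow p n) := by
  induction n with
  | zero => simp [pathPow]
  | succ n ih =>
    change (pathPow p (n + 1)).comp p = p.comp ((pathPow p n).comp p)
    rw [ih, Path.comp_assoc]

namespace Quiver.Path

variable {V : Type*} [Quiver V]

theorem exists_eq_comp_of_comp_eq_comp {a b c d : V} {q₁ : Path b d} {p₁ : Path a b}
    {p₂ : Path a c} {q₂ : Path c d} (h : p₁.comp q₁ = p₂.comp q₂)
    (hle : q₁.length ≤ q₂.length) :
    ∃ e : Path c b, q₂ = e.comp q₁ ∧ p₁ = p₂.comp e := by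
  induction q₁ with
  | nil => exact ⟨q₂, q₂.comp_nil.symm, by simpa using h⟩
  | @cons x y q₁' f ih =>
    cases q₂ with
    | nil => simp at hle
    | cons q₂' g =>
      rw [comp_cons, comp_cons] at h
      obtain rfl := obj_eq_of_cons_eq_cons h
      obtain rfl := eq_of_heq (hom_heq_of_cons_eq_cons h)
      obtain ⟨e, rfl, he⟩ :=
        ih (eq_of_heq (heq_of_cons_eq_cons h)) (Nat.le_of_succ_le_succ hle)
      exact ⟨e, (comp_cons e q₁' f).symm, he⟩

variable {a b : V} {p : Path a a} {q : Path a b} {r : Path b b}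

theorem length_eq_of_comp_eq_comp (h : p.comp q = q.comp r) : r.length = p.length := by
  have := congrArg length h
  simp only [length_comp] at this
  omega

theorem exists_eq_comp_of_comp_eq_comp_of_length_lt (h : p.comp q = q.comp r)
    (hlt : q.length < p.length) : ∃ e : Path b a, p = q.comp e ∧ r = e.comp q :=
  (exists_eq_comp_of_comp_eq_comp h ((length_eq_of_comp_eq_comp h).symm ▸ hlt.le)).imp
    fun _ ⟨hr, hp⟩ => ⟨hp, hr⟩

theorem exists_eq_comp_of_comp_eq_comp_of_length_le (h : p.comp q = q.comp r)
    (hle : p.length ≤ q.length) : ∃ q' : Path a b, q = p.comp q' ∧ p.comp q' = q'.comp r := by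
  obtain ⟨q', _, rfl⟩ :=
    exists_eq_comp_of_comp_eq_comp h.symm ((length_eq_of_comp_eq_comp h).trans_le hle)
  refine ⟨q', rfl, comp_injective_right p ?_⟩
  simpa only [comp_assoc] using h

theorem exists_eq_pathPow_comp_of_comp_eq_comp (hp : 0 < p.length) (h : p.comp q = q.comp r) :
    ∃ (s : ℕ) (p₁ : Path a b) (p₂ : Path b a),
      p = p₁.comp p₂ ∧ p₁.length < p.length ∧ q = (pathPow p s).comp p₁ ∧ r = p₂.comp p₁ := by
  induction hn : q.length using Nat.strong_induction_on generalizing q with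
  | _ n ih =>
  subst hn
  rcases lt_or_ge q.length p.length with hlt | hle
  · obtain ⟨e, hpe, hre⟩ := exists_eq_comp_of_comp_eq_comp_of_length_lt h hlt
    exact ⟨0, q, e, hpe, hlt, (nil_comp q).symm, hre⟩
  · obtain ⟨q', rfl, h'⟩ := exists_eq_comp_of_comp_eq_comp_of_length_le h hle
    have hshorter : q'.length < (p.comp q').length := by rw [length_comp]; omega
    obtain ⟨s, p₁, p₂, hp, hp₁, rfl, hr⟩ := ih _ hshorter h' rfl
    exact ⟨s + 1, p₁, p₂, hp, hp₁, by rw [pathPow_succ', comp_assoc], hr⟩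

end Quiver.Path

/-- If `p q = q r` as paths in a quiver and `p = a₁ ⋯ a_t` with `t ≥ 1`, then there are
`s ≥ 0` and a decomposition `p = p₁ p₂` with `ℓ(p₁) < t` (where `p₁ = a₁ ⋯ a_i`) such that
`q = pˢ p₁` and `r = p₂ p₁`.  In particular `p` and `r` are closed walks (this is encoded
in their types). -/
theorem stmt0 {V : Type*} [Quiver V] {a b : V}
    (p : Quiver.Path a a) (q : Quiver.Path a b) (r : Quiver.Path b b)
    (t : ℕ) (ht : 1 ≤ t) (hlen : p.length = t)
    (h : p.comp q = q.comp r) :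
    ∃ (s : ℕ) (p₁ : Quiver.Path a b) (p₂ : Quiver.Path b a),
      p = p₁.comp p₂ ∧ p₁.length < t ∧
      q = (pathPow p s).comp p₁ ∧ r = p₂.comp p₁ := by
  subst hlen
  exact Quiver.Path.exists_eq_pathPow_comp_of_comp_eq_comp ht h
end

section
/- Let E be a graded K-algebra with a multiplicative homogeneous basis satisfying the cancellation properties, and let z = Σ α_i g_i be a homogeneous element of the graded centre of E written in the basis with all α_i ≠ 0. If g is any basis element with g z ≠ 0 (in the basis expansion), then there exist indices i, j with g g_i = g_j g ≠ 0 and α_i = α_j. (Pairing of terms under central elements.) -/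
/-!
Left and right multiplication by a basis element `b g` are linear maps sending each basis
vector to a basis vector or to `0`, injectively on the basis vectors they do not kill
(cancellation). For such a map `f`, the coordinate of `f x` at `k` is the coordinate of `x`
at the unique `i` with `f (b i) = b k`, and vanishes when there is no such `i`. Pick `k`
with a nonzero coordinate of `b g * z = z * b g`: reading it off through left multiplication
gives `αᵢ` with `b g * b i = b k`, through right multiplication `αⱼ` with `b j * b g = b k`.
-/

namespace Module.Basis

variable {R M N ι κ : Type*} [CommRing R] [AddCommGroup M] [Module R M]
  [AddCommGroup N] [Module R N] (b : Basis ι R M) (c : Basis κ R N) {f : M →ₗ[R] N}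

theorem exists_apply_eq_of_repr_apply_ne_zero
    (hf : ∀ j, f (b j) = 0 ∨ ∃ k, f (b j) = c k) {x : M} {k : κ}
    (hx : c.repr (f x) k ≠ 0) : ∃ i, f (b i) = c k := by
  classical
  by_contra! hk
  suffices c.coord k ∘ₗ f = 0 from hx (LinearMap.congr_fun this x)
  refine b.ext fun j => ?_
  rcases hf j with h0 | ⟨k', hk'⟩
  · simp [h0]
  · have : k' ≠ k := by rintro rfl; exact hk j hk'
    simp [hk', this]

theorem repr_apply_eq_of_apply_eq [Nontrivial R]
    (hf : ∀ j, f (b j) = 0 ∨ ∃ k, f (b j) = c k)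
    (hinj : ∀ j j', f (b j) = f (b j') → f (b j) ≠ 0 → j = j')
    {i : ι} {k : κ} (hi : f (b i) = c k) (x : M) : c.repr (f x) k = b.repr x i := by
  classical
  suffices c.coord k ∘ₗ f = b.coord i from LinearMap.congr_fun this x
  refine b.ext fun j => ?_
  rcases hf j with h0 | ⟨k', hk'⟩
  · have : j ≠ i := by rintro rfl; exact c.ne_zero k (hi ▸ h0)
    simp [h0, this]
  · have : k' = k ↔ j = i := by
      constructor
      · rintro rfl; exact hinj j i (hk'.trans hi.symm) (hk' ▸ c.ne_zero k')
      · rintro rfl; exact c.injective (hk'.symm.trans hi)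
    simp [hk', Finsupp.single_apply, this]

theorem repr_sum_smul_apply [DecidableEq ι] (s : Finset ι) (α : ι → R) (i : ι) :
    b.repr (∑ j ∈ s, α j • b j) i = if i ∈ s then α i else 0 := by
  simp [map_sum, Finsupp.single_apply]

end Module.Basis

theorem stmt9_general {K E ι : Type*} [Field K] [Ring E] [Algebra K E]
    (b : Module.Basis ι K E) (deg : ι → ℕ)
    (hmult : ∀ i j : ι, b i * b j = 0 ∨
      ∃ k, deg k = deg i + deg j ∧ b i * b j = b k)
    (hlcancel : ∀ i j j' : ι, b i * b j = b i * b j' → b i * b j ≠ 0 → j = j')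
    (hrcancel : ∀ i j j' : ι, b j * b i = b j' * b i → b j * b i ≠ 0 → j = j')
    (s : Finset ι)
    (α : ι → K)
    (z : E) (hzdef : z = ∑ i ∈ s, α i • b i)
    (hcentral : ∀ g : ι, z * b g = b g * z)
    (g : ι) (hgz : b g * z ≠ 0) :
    ∃ i ∈ s, ∃ j ∈ s, b g * b i = b j * b g ∧ b g * b i ≠ 0 ∧ α i = α j := by
  classical
  have hmult' (i j : ι) : b i * b j = 0 ∨ ∃ k, b i * b j = b k :=
    (hmult i j).imp_right fun ⟨k, _, hk⟩ => ⟨k, hk⟩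
  have hz (i : ι) : b.repr z i = if i ∈ s then α i else 0 := hzdef ▸ b.repr_sum_smul_apply s α i
  obtain ⟨k, hk⟩ : ∃ k, b.repr (b g * z) k ≠ 0 := by
    by_contra! h
    exact hgz (b.repr.map_eq_zero_iff.mp (Finsupp.ext h))
  have hk' : b.repr (z * b g) k ≠ 0 := hcentral g ▸ hk
  obtain ⟨i, hi⟩ := b.exists_apply_eq_of_repr_apply_ne_zero (f := LinearMap.mulLeft K (b g)) b
    (hmult' g) hk
  obtain ⟨j, hj⟩ := b.exists_apply_eq_of_repr_apply_ne_zero (f := LinearMap.mulRight K (b g)) b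
    (hmult' · g) hk'
  have hzi : b.repr (b g * z) k = b.repr z i :=
    b.repr_apply_eq_of_apply_eq (f := LinearMap.mulLeft K (b g)) b (hmult' g) (hlcancel g) hi z
  have hzj : b.repr (z * b g) k = b.repr z j :=
    b.repr_apply_eq_of_apply_eq (f := LinearMap.mulRight K (b g)) b (hmult' · g) (hrcancel g) hj z
  have his : i ∈ s := by by_contra h; simp [hzi, hz, h] at hk
  have hjs : j ∈ s := by by_contra h; simp [hzj, hz, h] at hk'
  have hi : b g * b i = b k := hi
  have hj : b j * b g = b k := hj
  refine ⟨i, his, j, hjs, hi.trans hj.symm, hi ▸ b.ne_zero k, ?_⟩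
  calc α i = b.repr z i := by simp [hz, his]
    _ = b.repr z j := by rw [← hzi, ← hzj, hcentral]
    _ = α j := by simp [hz, hjs]

/-- In the multiplicative-basis framework: if `z = Σ αᵢ b(gᵢ)` is a homogeneous
even-degree element of the graded centre (so `z` commutes with all basis elements) with
all `αᵢ ≠ 0`, and `g` is a basis element with `b(g) z ≠ 0`, then there are indices
`i, j` in the support with `b(g) b(gᵢ) = b(gⱼ) b(g) ≠ 0` and `αᵢ = αⱼ`. -/
theorem stmt9 {K E ι : Type*} [Field K] [Ring E] [Algebra K E]
    (b : Module.Basis ι K E) (deg : ι → ℕ)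
    (hmult : ∀ i j : ι, b i * b j = 0 ∨
      ∃ k, deg k = deg i + deg j ∧ b i * b j = b k)
    (hlcancel : ∀ i j j' : ι, b i * b j = b i * b j' → b i * b j ≠ 0 → j = j')
    (hrcancel : ∀ i j j' : ι, b j * b i = b j' * b i → b j * b i ≠ 0 → j = j')
    (n : ℕ) (s : Finset ι) (hdeg : ∀ i ∈ s, deg i = 2 * n)
    (α : ι → K) (hα : ∀ i ∈ s, α i ≠ 0)
    (z : E) (hzdef : z = ∑ i ∈ s, α i • b i)
    (hcentral : ∀ g : ι, z * b g = b g * z)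
    (g : ι) (hgz : b g * z ≠ 0) :
    ∃ i ∈ s, ∃ j ∈ s, b g * b i = b j * b g ∧ b g * b i ≠ 0 ∧ α i = α j :=
  stmt9_general b deg hmult hlcancel hrcancel s α z hzdef hcentral g hgz
end
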